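/- Suppose V has dimension 3 over ℝ. Then for all elements U, V of the Clifford algebra Cl(Q), one has U·V + reverse(involute(U·V)) = V·U + reverse(involute(V·U)) (in dimension 3 this element equals twice the common projection of UV and VU onto the center of Cl(Q)). -/

import Mathlib

open CliffordAlgebra Submodule

/-!
Write `x̄ = star x = reverse (involute x)` for the Clifford conjugate. Since `x ↦ x + x̄` is linear
and `x̄` reverses products, the elements `x` with `xy + (xy)‾ = yx + (yx)‾` for all `y` form a
subalgebra, and a vector `m` belongs to it exactly when `m` commutes with every `y + ȳ`.
In dimension 3, pick an orthogonal basis `e₁, e₂, e₃`. Every element is a combination of the eight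
monomials `e_I`, and conjugation fixes `1` and `e₁e₂e₃` but negates the other six, so `y + ȳ` lies
in the span of `1` and `e₁e₂e₃`; the pseudoscalar `e₁e₂e₃` commutes with each `eᵢ`.
-/

section

variable {R M : Type*} [CommRing R] [AddCommGroup M] [Module R M] {Q : QuadraticForm R M}

theorem mul_add_star_mul_comm_of_commute_ι
    (h : ∀ (m : M) (x : CliffordAlgebra Q), Commute (ι Q m) (x + star x))
    (x y : CliffordAlgebra Q) : x * y + star (x * y) = y * x + star (y * x) := by
  induction x using CliffordAlgebra.induction generalizing y with
  | algebraMap r => simp only [star_mul, star_algebraMap, Algebra.commutes]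
  | ι m =>
    rw [star_mul, star_mul, star_ι, mul_neg, neg_mul, ← sub_eq_add_neg, ← sub_eq_add_neg,
      sub_eq_sub_iff_add_eq_add, ← mul_add, ← add_mul]
    exact (h m y).eq
  | mul a b ha hb =>
    calc a * b * y + star (a * b * y) = a * (b * y) + star (a * (b * y)) := by rw [mul_assoc]
      _ = b * y * a + star (b * y * a) := ha _
      _ = b * (y * a) + star (b * (y * a)) := by rw [mul_assoc]
      _ = y * a * b + star (y * a * b) := hb _
      _ = y * (a * b) + star (y * (a * b)) := by rw [mul_assoc]
  | add a b ha hb =>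
    rw [add_mul, mul_add, star_add, star_add, add_add_add_comm, ha, hb, add_add_add_comm]

theorem span_ι_mul_span_one_ι_self_le (u : M) :
    span R {ι Q u} * span R {1, ι Q u} ≤ span R {1, ι Q u} := by
  rw [span_mul_span, span_le, Set.singleton_mul]
  rintro _ ⟨z, hz | hz, rfl⟩ <;> subst hz <;> dsimp only
  · rw [mul_one]; exact subset_span (by simp)
  · rw [ι_sq_scalar, Algebra.algebraMap_eq_smul_one]
    exact smul_mem _ _ (subset_span (by simp))

theorem span_ι_mul_span_one_ι_le_of_isOrtho {u v : M} (h : Q.IsOrtho u v) :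
    span R {ι Q v} * span R {1, ι Q u} ≤ span R {1, ι Q u} * span R {ι Q v} := by
  rw [span_mul_span, span_mul_span, span_le, Set.singleton_mul]
  rintro _ ⟨z, hz | hz, rfl⟩ <;> subst hz <;> dsimp only
  · exact subset_span ⟨1, by simp, ι Q v, rfl, by simp⟩
  · rw [ι_mul_ι_comm_of_isOrtho h.symm]
    exact neg_mem (subset_span (Set.mul_mem_mul (by simp) rfl))

variable (Q) in
def monomialSpan (u v w : M) : Submodule R (CliffordAlgebra Q) :=
  span R {1, ι Q u} * span R {1, ι Q v} * span R {1, ι Q w}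

variable {u v w : M}

theorem one_mem_monomialSpan : (1 : CliffordAlgebra Q) ∈ monomialSpan Q u v w := by
  have one_mem_span (z : CliffordAlgebra Q) : (1 : CliffordAlgebra Q) ∈ span R {1, z} :=
    subset_span (by simp)
  simpa only [monomialSpan, mul_one] using
    mul_mem_mul (mul_mem_mul (one_mem_span (ι Q u)) (one_mem_span (ι Q v))) (one_mem_span (ι Q w))

theorem span_ι_mul_monomialSpan_le (huv : Q.IsOrtho u v) (huw : Q.IsOrtho u w)
    (hvw : Q.IsOrtho v w) : span R {ι Q u, ι Q v, ι Q w} * monomialSpan Q u v w ≤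
      monomialSpan Q u v w := by
  set Pu := span R {(1 : CliffordAlgebra Q), ι Q u}
  set Pv := span R {(1 : CliffordAlgebra Q), ι Q v}
  set Pw := span R {(1 : CliffordAlgebra Q), ι Q w}
  rw [monomialSpan, span_insert, span_insert, ← sup_assoc, Submodule.sup_mul, Submodule.sup_mul,
    sup_le_iff, sup_le_iff]
  refine ⟨⟨?_, ?_⟩, ?_⟩
  · calc span R {ι Q u} * (Pu * Pv * Pw) = span R {ι Q u} * Pu * Pv * Pw := by
          simp only [mul_assoc]
      _ ≤ Pu * Pv * Pw := by gcongr; exact span_ι_mul_span_one_ι_self_le u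
  · calc span R {ι Q v} * (Pu * Pv * Pw) = span R {ι Q v} * Pu * Pv * Pw := by
          simp only [mul_assoc]
      _ ≤ Pu * span R {ι Q v} * Pv * Pw := by
          gcongr ?_ * Pv * Pw; exact span_ι_mul_span_one_ι_le_of_isOrtho huv
      _ = Pu * (span R {ι Q v} * Pv) * Pw := by simp only [mul_assoc]
      _ ≤ Pu * Pv * Pw := by gcongr; exact span_ι_mul_span_one_ι_self_le v
  · calc span R {ι Q w} * (Pu * Pv * Pw) = span R {ι Q w} * Pu * Pv * Pw := by
          simp only [mul_assoc]
      _ ≤ Pu * (span R {ι Q w} * Pv) * Pw := by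
          rw [← mul_assoc Pu]; gcongr ?_ * Pv * Pw
          exact span_ι_mul_span_one_ι_le_of_isOrtho huw
      _ ≤ Pu * (Pv * span R {ι Q w}) * Pw := by
          gcongr Pu * ?_ * Pw; exact span_ι_mul_span_one_ι_le_of_isOrtho hvw
      _ = Pu * Pv * (span R {ι Q w} * Pw) := by simp only [mul_assoc]
      _ ≤ Pu * Pv * Pw := by gcongr; exact span_ι_mul_span_one_ι_self_le w

theorem range_ι_eq_span (hspan : span R {u, v, w} = ⊤) :
    LinearMap.range (ι Q) = span R {ι Q u, ι Q v, ι Q w} := by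
  rw [LinearMap.range_eq_map, ← hspan, map_span, Set.image_insert_eq, Set.image_insert_eq,
    Set.image_singleton]

theorem monomialSpan_eq_top (huv : Q.IsOrtho u v) (huw : Q.IsOrtho u w) (hvw : Q.IsOrtho v w)
    (hspan : span R {u, v, w} = ⊤) : monomialSpan Q u v w = ⊤ := by
  refine eq_top_iff'.2 fun x => ?_
  induction x using left_induction with
  | algebraMap r => rw [Algebra.algebraMap_eq_smul_one]; exact smul_mem _ _ one_mem_monomialSpan
  | add x y hx hy => exact add_mem hx hy
  | ι_mul x m hx =>
    have hm : ι Q m ∈ span R {ι Q u, ι Q v, ι Q w} :=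
      range_ι_eq_span hspan ▸ LinearMap.mem_range_self _ m
    exact span_ι_mul_monomialSpan_le huv huw hvw (mul_mem_mul hm hx)

theorem add_star_mem_span_one_ι_mul_ι_mul_ι (huv : Q.IsOrtho u v) (huw : Q.IsOrtho u w)
    (hvw : Q.IsOrtho v w) {x : CliffordAlgebra Q}
    (hx : x ∈ monomialSpan Q u v w) : x + star x ∈ span R {1, ι Q u * ι Q v * ι Q w} := by
  rw [monomialSpan, span_mul_span, span_mul_span] at hx
  induction hx using span_induction with
  | mem z hz =>
    obtain ⟨_, ⟨p, hp, q, hq, rfl⟩, r, hr, rfl⟩ := hz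
    simp only [Set.mem_insert_iff, Set.mem_singleton_iff] at hp hq hr
    rcases hp with rfl | rfl <;> rcases hq with rfl | rfl <;> rcases hr with rfl | rfl <;>
      simp only [star_mul, star_one, star_ι, mul_one, one_mul, mul_neg, neg_mul, neg_neg, mul_assoc,
        ι_mul_ι_comm_of_isOrtho huv.symm, ι_mul_ι_comm_of_isOrtho huw.symm,
        ι_mul_ι_comm_of_isOrtho hvw.symm, ι_mul_ι_mul_of_isOrtho _ huv.symm,
        add_neg_cancel, zero_mem]
    all_goals exact add_mem (subset_span (by simp)) (subset_span (by simp))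
  | zero => simp
  | add x y _ _ hx hy => rw [star_add, add_add_add_comm]; exact add_mem hx hy
  | smul r x _ hx => rw [CliffordAlgebra.star_smul, ← smul_add]; exact smul_mem _ r hx

theorem commute_ι_mul_ι_mul_ι_of_isOrtho (huv : Q.IsOrtho u v) (huw : Q.IsOrtho u w) :
    Commute (ι Q u) (ι Q u * ι Q v * ι Q w) := by
  refine mul_assoc (ι Q u) _ _ ▸ (Commute.refl _).mul_right ?_
  change ι Q u * (ι Q v * ι Q w) = ι Q v * ι Q w * ι Q u
  rw [ι_mul_ι_mul_of_isOrtho _ huv, ι_mul_ι_comm_of_isOrtho huw, mul_neg, neg_neg, mul_assoc]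

theorem commute_ι_of_mem_span_one_ι_mul_ι_mul_ι (huv : Q.IsOrtho u v) (huw : Q.IsOrtho u w)
    (hvw : Q.IsOrtho v w) (hspan : span R {u, v, w} = ⊤) (m : M) {z : CliffordAlgebra Q}
    (hz : z ∈ span R {1, ι Q u * ι Q v * ι Q w}) : Commute (ι Q m) z := by
  have hv : ι Q u * ι Q v * ι Q w = -(ι Q v * ι Q u * ι Q w) := by
    rw [ι_mul_ι_comm_of_isOrtho huv, neg_mul]
  have hw : ι Q u * ι Q v * ι Q w = ι Q w * ι Q u * ι Q v := by
    rw [mul_ι_mul_ι_of_isOrtho _ hvw, ι_mul_ι_comm_of_isOrtho huw, neg_mul, neg_neg]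
  have hgen : ∀ g ∈ ({ι Q u, ι Q v, ι Q w} : Set (CliffordAlgebra Q)),
      Commute g (ι Q u * ι Q v * ι Q w) := by
    rintro _ (rfl | rfl | rfl)
    · exact commute_ι_mul_ι_mul_ι_of_isOrtho huv huw
    · exact hv ▸ (commute_ι_mul_ι_mul_ι_of_isOrtho huv.symm hvw).neg_right
    · exact hw ▸ commute_ι_mul_ι_mul_ι_of_isOrtho huw.symm hvw.symm
  have hm : ι Q m ∈ span R {ι Q u, ι Q v, ι Q w} :=
    range_ι_eq_span hspan ▸ LinearMap.mem_range_self _ m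
  refine Commute.span_left (fun g hg => Commute.span_right ?_ z hz) (ι Q m) hm
  rintro _ (rfl | rfl)
  exacts [Commute.one_right g, hgen g hg]

theorem commute_ι_add_star_of_isOrtho (huv : Q.IsOrtho u v) (huw : Q.IsOrtho u w)
    (hvw : Q.IsOrtho v w) (hspan : span R {u, v, w} = ⊤) (m : M) (x : CliffordAlgebra Q) :
    Commute (ι Q m) (x + star x) :=
  commute_ι_of_mem_span_one_ι_mul_ι_mul_ι huv huw hvw hspan m <|
    add_star_mem_span_one_ι_mul_ι_mul_ι huv huw hvw <|
      (monomialSpan_eq_top huv huw hvw hspan).symm ▸ mem_top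

end

theorem stmt_6 {M : Type*} [AddCommGroup M] [Module ℝ M] (Q : QuadraticForm ℝ M)
    (h : Module.finrank ℝ M = 3) (U V : CliffordAlgebra Q) :
    U * V + reverse (involute (U * V)) = V * U + reverse (involute (V * U)) := by
  have : FiniteDimensional ℝ M := .of_finrank_pos (by omega)
  obtain ⟨b, hb⟩ :=
    LinearMap.BilinForm.exists_orthogonal_basis (QuadraticForm.associated_isSymm ℝ Q)
  let e := b.reindex (finCongr h)
  have ortho {i j : Fin 3} (hij : i ≠ j) : Q.IsOrtho (e i) (e j) := by
    simp only [e, Module.Basis.reindex_apply]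
    exact QuadraticMap.associated_isOrtho.1 (hb ((finCongr h).symm.injective.ne hij))
  have hspan : span ℝ {e 0, e 1, e 2} = ⊤ := by
    rw [← e.span_eq]
    congr
    ext
    simp [Fin.exists_fin_succ, eq_comm]
  simpa only [star_def] using mul_add_star_mul_comm_of_commute_ι
    (commute_ι_add_star_of_isOrtho (ortho (i := 0) (j := 1) (by decide))
      (ortho (i := 0) (j := 2) (by decide)) (ortho (i := 1) (j := 2) (by decide)) hspan) U V
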